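/- Let p, σ > 0. For ε > 0 and ζ, b > 0 define A(ε) = N((p/σ)√ζ − ε/(σ√ζ)) + e^{2pε/σ²}·N(−(p/σ)√ζ − ε/(σ√ζ)) and B(ε) = e^{−2pε/σ²}·N((p/σ)√b − ε/(σ√b)) + N(−(p/σ)√b − ε/(σ√b)), where N is the standard normal CDF. Then lim_{ε↓0} (B(ε)·(1 − A(ε)))/(1 − B(ε)·A(ε)) = (√b·Ψ((p/σ)√(ζ/2)) − (p/σ)√(bζπ/2)) / (√b·Ψ((p/σ)√(ζ/2)) + √ζ·Ψ((p/σ)√(b/2))), where Ψ(x) = 2√π·x·N(√2 x) − √π·x + e^{−x²}. -/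

import Mathlib

open Real Set Filter

/-- Standard normal cumulative distribution function. -/
noncomputable def stdNormalCDF (y : ℝ) : ℝ :=
  (1 / Real.sqrt (2 * Real.pi)) * ∫ t in Set.Iic y, Real.exp (-t ^ 2 / 2)

/-- The function Ψ from the Parisian ruin formula for Brownian motion with drift. -/
noncomputable def Psi (x : ℝ) : ℝ :=
  2 * Real.sqrt Real.pi * x * stdNormalCDF (Real.sqrt 2 * x)
    - Real.sqrt Real.pi * x + Real.exp (-x ^ 2)

/-!
Write `A ε = H(a, ε / (σ √ζ))` and `B ε = H(-u, ε / (σ √b))` with `a = p √ζ / σ`, `u = p √b / σ`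
and `H(x, t) = N(x - t) + e^{2xt} N(-x - t)`. Since `H(x, 0) = 1`, numerator and denominator
of `B (1 - A) / (1 - B A)` both vanish at `ε = 0`, so the limit is the ratio of their derivatives,
`A'(0) / (A'(0) + B'(0))`, with `∂ₜH(x, 0) = 2 (x N(-x) - φ(x))`. The denominator is nonzero
because `N(-a) ≤ N(u)`, and `Ψ(x / √2) = √(2π) (x N(x) - x/2 + φ(x))` turns the claimed value
into the same ratio.
-/

open MeasureTheory Topology

section LHopital

variable {𝕜 : Type*} [NontriviallyNormedField 𝕜] {f g : 𝕜 → 𝕜} {f' g' x₀ : 𝕜}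

theorem tendsto_div_of_hasDerivAt_of_eq_zero (hf : HasDerivAt f f' x₀) (hg : HasDerivAt g g' x₀)
    (hf₀ : f x₀ = 0) (hg₀ : g x₀ = 0) (hg' : g' ≠ 0) :
    Tendsto (fun x => f x / g x) (𝓝[≠] x₀) (𝓝 (f' / g')) := by
  refine ((hasDerivAt_iff_tendsto_slope.mp hf).div
    (hasDerivAt_iff_tendsto_slope.mp hg) hg').congr' ?_
  filter_upwards [self_mem_nhdsWithin] with x hx
  rw [Pi.div_apply, slope_def_field, slope_def_field, hf₀, hg₀, sub_zero, sub_zero,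
    div_div_div_cancel_right₀ (sub_ne_zero.mpr hx)]

theorem tendsto_mul_one_sub_div_one_sub_mul (hf : HasDerivAt f f' x₀) (hg : HasDerivAt g g' x₀)
    (hf₀ : f x₀ = 1) (hg₀ : g x₀ = 1) (hfg : f' + g' ≠ 0) :
    Tendsto (fun x => g x * (1 - f x) / (1 - g x * f x)) (𝓝[≠] x₀) (𝓝 (f' / (f' + g'))) := by
  have hnum : HasDerivAt (fun x => g x * (1 - f x)) (-f') x₀ := by
    refine (hg.mul (hf.const_sub 1)).congr_deriv ?_
    rw [hf₀, hg₀]; ring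
  have hden : HasDerivAt (fun x => 1 - g x * f x) (-(f' + g')) x₀ := by
    refine ((hg.mul hf).const_sub 1).congr_deriv ?_
    rw [hf₀, hg₀]; ring
  rw [← neg_div_neg_eq]
  exact tendsto_div_of_hasDerivAt_of_eq_zero hnum hden (by simp [hf₀, hg₀])
    (by simp [hf₀, hg₀]) (neg_ne_zero.mpr hfg)

end LHopital

noncomputable def stdNormalPDF (x : ℝ) : ℝ :=
  1 / √(2 * π) * exp (-x ^ 2 / 2)

theorem stdNormalPDF_pos (x : ℝ) : 0 < stdNormalPDF x := by
  unfold stdNormalPDF; positivity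

@[simp]
theorem stdNormalPDF_neg (x : ℝ) : stdNormalPDF (-x) = stdNormalPDF x := by
  simp [stdNormalPDF]

theorem integrable_exp_neg_sq_div_two : Integrable fun t : ℝ => exp (-t ^ 2 / 2) := by
  simpa [neg_div, div_eq_inv_mul] using integrable_exp_neg_mul_sq (by norm_num : (0 : ℝ) < 1 / 2)

theorem integral_exp_neg_sq_div_two : ∫ t : ℝ, exp (-t ^ 2 / 2) = √(2 * π) := by
  simpa [neg_div, div_eq_inv_mul, mul_comm] using integral_gaussian (1 / 2)

theorem stdNormalCDF_add_stdNormalCDF_neg (y : ℝ) : stdNormalCDF y + stdNormalCDF (-y) = 1 := by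
  have hreflect : ∫ t in Iic (-y), exp (-t ^ 2 / 2) = ∫ t in Ioi y, exp (-t ^ 2 / 2) := by
    simp [← integral_comp_neg_Ioi]
  have hint := integrable_exp_neg_sq_div_two
  rw [stdNormalCDF, stdNormalCDF, hreflect, ← mul_add,
    intervalIntegral.integral_Iic_add_Ioi hint.integrableOn hint.integrableOn,
    integral_exp_neg_sq_div_two, one_div_mul_cancel (by positivity)]

theorem monotone_stdNormalCDF : Monotone stdNormalCDF := fun x y hxy =>
  mul_le_mul_of_nonneg_left (setIntegral_mono_set integrable_exp_neg_sq_div_two.integrableOn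
    (Eventually.of_forall fun t => (exp_pos _).le) (Iic_subset_Iic.mpr hxy).eventuallyLE)
    (by positivity)

theorem hasDerivAt_stdNormalCDF (y : ℝ) : HasDerivAt stdNormalCDF (stdNormalPDF y) y := by
  have hint := integrable_exp_neg_sq_div_two
  have hsplit : stdNormalCDF = fun y => 1 / √(2 * π) *
      ((∫ t in Iic 0, exp (-t ^ 2 / 2)) + ∫ t in (0 : ℝ)..y, exp (-t ^ 2 / 2)) := by
    ext y
    rw [stdNormalCDF, ← intervalIntegral.integral_Iic_sub_Iic hint.integrableOn hint.integrableOn,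
      add_sub_cancel]
  have hcont : Continuous fun t : ℝ => exp (-t ^ 2 / 2) := by fun_prop
  rw [hsplit]
  exact ((hcont.integral_hasStrictDerivAt 0 y).hasDerivAt.const_add _).const_mul _

theorem Psi_div_sqrt_two (x : ℝ) :
    Psi (x / √2) = √(2 * π) * (x * stdNormalCDF x - x / 2 + stdNormalPDF x) := by
  have h2 : √2 ^ 2 = 2 := sq_sqrt zero_le_two
  rw [Psi, mul_div_cancel₀ x (by positivity), stdNormalPDF, sqrt_mul zero_le_two, div_pow, h2,
    neg_div]
  field_simp
  linear_combination (√π * x - 2 * √π * x * stdNormalCDF x) * h2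

/-- `hitProb x t = P(sup_{s ≤ 1} (W s + x s) ≥ t)` for a standard Brownian motion `W`. -/
noncomputable def hitProb (x t : ℝ) : ℝ :=
  stdNormalCDF (x - t) + exp (2 * x * t) * stdNormalCDF (-x - t)

theorem hitProb_zero (x : ℝ) : hitProb x 0 = 1 := by
  simp [hitProb, stdNormalCDF_add_stdNormalCDF_neg]

noncomputable def hitProbDeriv (x : ℝ) : ℝ :=
  2 * (x * stdNormalCDF (-x) - stdNormalPDF x)

theorem hasDerivAt_hitProb_zero (x : ℝ) : HasDerivAt (hitProb x) (hitProbDeriv x) 0 := by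
  have hcdf₁ : HasDerivAt (fun t => stdNormalCDF (x - t)) (-stdNormalPDF x) 0 := by
    simpa using (hasDerivAt_stdNormalCDF (x - 0)).comp_const_sub x 0
  have hcdf₂ : HasDerivAt (fun t => stdNormalCDF (-x - t)) (-stdNormalPDF x) 0 := by
    simpa using (hasDerivAt_stdNormalCDF (-x - 0)).comp_const_sub (-x) 0
  have hexp : HasDerivAt (fun t => exp (2 * x * t)) (2 * x) 0 := by
    simpa using ((hasDerivAt_id (0 : ℝ)).const_mul (2 * x)).exp
  refine (hcdf₁.add (hexp.mul hcdf₂)).congr_deriv ?_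
  simp only [hitProbDeriv, mul_zero, exp_zero, sub_zero, one_mul]
  ring

theorem hasDerivAt_hitProb_div (x m : ℝ) :
    HasDerivAt (fun ε => hitProb x (ε / m)) (hitProbDeriv x / m) 0 := by
  have hhit := hasDerivAt_hitProb_zero x
  rw [← zero_div m] at hhit
  exact (hhit.comp (0 : ℝ) ((hasDerivAt_id 0).div_const m)).congr_deriv (mul_one_div _ _)

theorem hitProbDeriv_div_add_hitProbDeriv_neg_div_neg {x₁ x₂ m₁ m₂ : ℝ} (hx₁ : 0 ≤ x₁)
    (hx₂ : 0 ≤ x₂) (hm₁ : 0 < m₁) (hm₂ : 0 < m₂) (hx : x₁ * m₂ = x₂ * m₁) :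
    hitProbDeriv x₁ / m₁ + hitProbDeriv (-x₂) / m₂ < 0 := by
  have hκ : x₂ / m₂ = x₁ / m₁ := by
    rw [div_eq_div_iff hm₂.ne' hm₁.ne']; linarith
  have hmono : stdNormalCDF (-x₁) ≤ stdNormalCDF x₂ := monotone_stdNormalCDF (by linarith)
  have hdrift : x₁ / m₁ * stdNormalCDF (-x₁) - x₂ / m₂ * stdNormalCDF x₂ ≤ 0 := by
    rw [hκ, ← mul_sub]
    exact mul_nonpos_of_nonneg_of_nonpos (by positivity) (sub_nonpos.mpr hmono)
  have hφ₁ : 0 < stdNormalPDF x₁ / m₁ := div_pos (stdNormalPDF_pos x₁) hm₁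
  have hφ₂ : 0 < stdNormalPDF x₂ / m₂ := div_pos (stdNormalPDF_pos x₂) hm₂
  have hsplit : hitProbDeriv x₁ / m₁ + hitProbDeriv (-x₂) / m₂
      = 2 * (x₁ / m₁ * stdNormalCDF (-x₁) - x₂ / m₂ * stdNormalCDF x₂)
        - 2 * (stdNormalPDF x₁ / m₁) - 2 * (stdNormalPDF x₂ / m₂) := by
    rw [hitProbDeriv, hitProbDeriv, neg_neg, stdNormalPDF_neg]
    ring
  linarith

theorem Psi_ratio_eq_hitProbDeriv_ratio {p σ ζ b : ℝ} (hσ : σ ≠ 0) (hζ : 0 < ζ) (hb : 0 < b) :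
    (√b * Psi (p / σ * √(ζ / 2)) - p / σ * √(b * ζ * π / 2))
      / (√b * Psi (p / σ * √(ζ / 2)) + √ζ * Psi (p / σ * √(b / 2)))
    = hitProbDeriv (p / σ * √ζ) / (σ * √ζ)
      / (hitProbDeriv (p / σ * √ζ) / (σ * √ζ) + hitProbDeriv (-(p / σ * √b)) / (σ * √b)) := by
  set a := p / σ * √ζ
  set u := p / σ * √b
  have hΨζ : Psi (p / σ * √(ζ / 2)) = √(2 * π) * (a * stdNormalCDF a - a / 2 + stdNormalPDF a) := by
    rw [sqrt_div' ζ zero_le_two, ← mul_div_assoc, Psi_div_sqrt_two]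
  have hΨb : Psi (p / σ * √(b / 2)) = √(2 * π) * (u * stdNormalCDF u - u / 2 + stdNormalPDF u) := by
    rw [sqrt_div' b zero_le_two, ← mul_div_assoc, Psi_div_sqrt_two]
  have hsqrt : √(b * ζ * π / 2) = √b * √ζ * √(2 * π) / 2 := by
    rw [show b * ζ * π / 2 = b * ζ * (2 * π) / 2 ^ 2 by ring, sqrt_div' _ (by positivity),
      sqrt_sq zero_le_two, sqrt_mul (by positivity), sqrt_mul hb.le]
  have hNa : stdNormalCDF a = 1 - stdNormalCDF (-a) := by
    linarith [stdNormalCDF_add_stdNormalCDF_neg a]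
  set c := -(σ * √ζ * √b * √(2 * π) / 2)
  have hc : c ≠ 0 := neg_ne_zero.mpr (by positivity)
  have hnum : √b * Psi (p / σ * √(ζ / 2)) - p / σ * √(b * ζ * π / 2)
      = c * (hitProbDeriv a / (σ * √ζ)) := by
    rw [hΨζ, hsqrt, hNa, hitProbDeriv]
    simp only [a, c]
    field_simp
    ring
  have hden : √b * Psi (p / σ * √(ζ / 2)) + √ζ * Psi (p / σ * √(b / 2))
      = c * (hitProbDeriv a / (σ * √ζ) + hitProbDeriv (-u) / (σ * √b)) := by
    rw [hΨζ, hΨb, hNa, hitProbDeriv, hitProbDeriv, neg_neg, stdNormalPDF_neg]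
    simp only [a, u, c]
    field_simp
    ring
  rw [hnum, hden, mul_div_mul_left _ _ hc]

theorem parisian_brownian_inner_limit (p σ ζ b : ℝ) (hp : 0 < p) (hσ : 0 < σ)
    (hζ : 0 < ζ) (hb : 0 < b) :
    Tendsto (fun ε : ℝ =>
        let A := stdNormalCDF ((p / σ) * Real.sqrt ζ - ε / (σ * Real.sqrt ζ))
          + Real.exp (2 * p * ε / σ ^ 2) *
            stdNormalCDF (-(p / σ) * Real.sqrt ζ - ε / (σ * Real.sqrt ζ))
        let B := Real.exp (-(2 * p * ε) / σ ^ 2) *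
            stdNormalCDF ((p / σ) * Real.sqrt b - ε / (σ * Real.sqrt b))
          + stdNormalCDF (-(p / σ) * Real.sqrt b - ε / (σ * Real.sqrt b))
        (B * (1 - A)) / (1 - B * A))
      (nhdsWithin 0 (Set.Ioi 0))
      (nhds ((Real.sqrt b * Psi ((p / σ) * Real.sqrt (ζ / 2))
            - (p / σ) * Real.sqrt (b * ζ * Real.pi / 2))
          / (Real.sqrt b * Psi ((p / σ) * Real.sqrt (ζ / 2))
            + Real.sqrt ζ * Psi ((p / σ) * Real.sqrt (b / 2))))) := by
  have hne : hitProbDeriv (p / σ * √ζ) / (σ * √ζ) + hitProbDeriv (-(p / σ * √b)) / (σ * √b) ≠ 0 :=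
    (hitProbDeriv_div_add_hitProbDeriv_neg_div_neg (by positivity) (by positivity)
      (by positivity) (by positivity) (by ring)).ne
  rw [Psi_ratio_eq_hitProbDeriv_ratio hσ.ne' hζ hb]
  refine ((tendsto_mul_one_sub_div_one_sub_mul (hasDerivAt_hitProb_div _ _)
    (hasDerivAt_hitProb_div _ _) (by rw [zero_div, hitProb_zero])
    (by rw [zero_div, hitProb_zero]) hne).mono_left
      (nhdsWithin_mono _ fun ε hε => ne_of_gt hε)).congr fun ε => ?_
  have hexp : 2 * (p / σ * √ζ) * (ε / (σ * √ζ)) = 2 * p * ε / σ ^ 2 := by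
    field_simp
  have hexp' : 2 * -(p / σ * √b) * (ε / (σ * √b)) = -(2 * p * ε) / σ ^ 2 := by
    field_simp
  simp only [hitProb, hexp, hexp', neg_neg, neg_mul]
  ring
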